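/- arXiv:1208.1033 — 2 statements merged into one kernel-verified Lean document; each statement's English description precedes it below -/
import Mathlib

section
/- Let a < b, let φ : [a,b] → [a,b] be an affine continuous map with φ(a) < φ(b), let g : [a,b] → [0,∞) be a φ-P-function (φ_h-convex with h(t) = 1) that is Lebesgue integrable, and let f : [a,b] → [0,∞) be Lebesgue integrable and (g,φ_h)-convex dominated on [a,b] with h(t) = 1. Then |(1/(φ(b) − φ(a))) ∫_{φ(a)}^{φ(b)} f(x) dx − (1/2) f((φ(a) + φ(b))/2)| ≤ (1/(φ(b) − φ(a))) ∫_{φ(a)}^{φ(b)} g(x) dx − (1/2) g((φ(a) + φ(b))/2). -/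
open MeasureTheory Set

/-- `F` is `φ_h`-convex on `I`. -/
def PhiHConvexOn (I : Set ℝ) (h φ F : ℝ → ℝ) : Prop :=
  ∀ x ∈ I, ∀ y ∈ I, ∀ t ∈ Set.Ioo (0:ℝ) 1,
    F (t * φ x + (1 - t) * φ y) ≤ h t * F (φ x) + h (1 - t) * F (φ y)

/-- `f` is `(g, φ_h)`-convex dominated on `I`. -/
def GPhiHConvexDominated (I : Set ℝ) (h φ g f : ℝ → ℝ) : Prop :=
  ∀ x ∈ I, ∀ y ∈ I, ∀ t ∈ Set.Ioo (0:ℝ) 1,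
    |h t * f (φ x) + h (1 - t) * f (φ y) - f (t * φ x + (1 - t) * φ y)| ≤
      h t * g (φ x) + h (1 - t) * g (φ y) - g (t * φ x + (1 - t) * φ y)


/-!
For `x ∈ [φ a, φ b]`, affinity of `φ` gives points `p, q ∈ [a, b]` with `φ p = x` and
`φ q = φ a + φ b - x`; the domination at `t = 1/2` then reads
`|f x + f (φ a + φ b - x) - f m| ≤ g x + g (φ a + φ b - x) - g m` with `m` the midpoint.
Integrating over `[φ a, φ b]`, where the reflection `x ↦ φ a + φ b - x` preserves integrals, both
sides become `2 ∫ - (φ b - φ a) · (value at m)`, and dividing by `2 (φ b - φ a)` gives the claim.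
-/

section Reflection

variable {f : ℝ → ℝ} {c d : ℝ}

lemma IntervalIntegrable.comp_reflect (hf : IntervalIntegrable f volume c d) :
    IntervalIntegrable (fun x => f (c + d - x)) volume c d := by
  simpa using (hf.comp_sub_left (c + d)).symm

lemma intervalIntegral.integral_sub_half_eq_half_integral_add_reflect
    (hf : IntervalIntegrable f volume c d) (y : ℝ) :
    ∫ x in c..d, (f x - 1 / 2 * y) = 1 / 2 * ∫ x in c..d, (f x + f (c + d - x) - y) := by
  rw [intervalIntegral.integral_sub hf intervalIntegrable_const,
    intervalIntegral.integral_sub (hf.add hf.comp_reflect) intervalIntegrable_const,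
    intervalIntegral.integral_add hf hf.comp_reflect,
    intervalIntegral.integral_comp_sub_left (fun x => f x) (c + d)]
  simp only [add_sub_cancel_right, add_sub_cancel_left, intervalIntegral.integral_const,
    smul_eq_mul]
  ring

-- The parentheses only make explicit how `∫ x in c..d, f x - y` parses.
theorem abs_average_sub_half_le_of_reflect_dominated {g : ℝ → ℝ} (hcd : c < d)
    (hf : IntervalIntegrable f volume c d) (hg : IntervalIntegrable g volume c d)
    (hdom : ∀ x ∈ Icc c d, |f x + f (c + d - x) - f ((c + d) / 2)| ≤
      g x + g (c + d - x) - g ((c + d) / 2)) :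
    |1 / (d - c) * ∫ x in c..d, (f x - 1 / 2 * f ((c + d) / 2))| ≤
      1 / (d - c) * ∫ x in c..d, (g x - 1 / 2 * g ((c + d) / 2)) := by
  have hF := (hf.add hf.comp_reflect).sub (intervalIntegrable_const (c := f ((c + d) / 2)))
  have hG := (hg.add hg.comp_reflect).sub (intervalIntegrable_const (c := g ((c + d) / 2)))
  have hpos : 0 < 1 / (d - c) * (1 / 2) := by have := sub_pos.2 hcd; positivity
  rw [intervalIntegral.integral_sub_half_eq_half_integral_add_reflect hf,
    intervalIntegral.integral_sub_half_eq_half_integral_add_reflect hg,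
    ← mul_assoc, ← mul_assoc, abs_mul, abs_of_pos hpos]
  exact mul_le_mul_of_nonneg_left ((intervalIntegral.abs_integral_le_integral_abs hcd.le).trans
    (intervalIntegral.integral_mono_on hcd.le hF.abs hG hdom)) hpos.le

end Reflection

section AffineMap

variable {a b : ℝ} {φ : ℝ → ℝ}

lemma exists_mem_Icc_map_eq_and_map_eq_reflect (hab : a ≤ b)
    (hφaff : ∀ x ∈ Icc a b, ∀ y ∈ Icc a b, ∀ l ∈ Icc (0:ℝ) 1,
      φ (l * x + (1 - l) * y) = l * φ x + (1 - l) * φ y)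
    (hφab : φ a < φ b) {x : ℝ} (hx : x ∈ Icc (φ a) (φ b)) :
    ∃ p ∈ Icc a b, ∃ q ∈ Icc a b, φ p = x ∧ φ q = φ a + φ b - x := by
  have ha : a ∈ Icc a b := ⟨le_rfl, hab⟩
  have hb : b ∈ Icc a b := ⟨hab, le_rfl⟩
  have hL : 0 < φ b - φ a := sub_pos.2 hφab
  set l := (φ b - x) / (φ b - φ a)
  have hl : l ∈ Icc (0:ℝ) 1 :=
    ⟨div_nonneg (by linarith [hx.2]) hL.le, (div_le_one hL).2 (by linarith [hx.1])⟩
  have hlx : l * φ a + (1 - l) * φ b = x := by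
    simp only [l]; field_simp; ring
  refine ⟨l * a + (1 - l) * b, ⟨?_, ?_⟩, l * b + (1 - l) * a, ⟨?_, ?_⟩, ?_, ?_⟩
  any_goals nlinarith [hl.1, hl.2]
  · rw [hφaff a ha b hb l hl, hlx]
  · rw [hφaff b hb a ha l hl]; linarith

lemma GPhiHConvexDominated.abs_add_sub_midpoint_le {f g : ℝ → ℝ}
    (hfdom : GPhiHConvexDominated (Icc a b) (fun _ => 1) φ g f) {p q : ℝ}
    (hp : p ∈ Icc a b) (hq : q ∈ Icc a b) :
    |f (φ p) + f (φ q) - f ((φ p + φ q) / 2)| ≤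
      g (φ p) + g (φ q) - g ((φ p + φ q) / 2) := by
  have hmid : (φ p + φ q) / 2 = 1 / 2 * φ p + (1 - 1 / 2) * φ q := by ring
  simpa only [hmid, one_mul] using hfdom p hp q hq (1 / 2) (by norm_num)

end AffineMap

theorem stmt9_general (a b : ℝ) (hab : a < b) (φ f g : ℝ → ℝ)
    (hφmaps : Set.MapsTo φ (Set.Icc a b) (Set.Icc a b))
    (hφaff : ∀ x ∈ Set.Icc a b, ∀ y ∈ Set.Icc a b, ∀ l ∈ Set.Icc (0:ℝ) 1,
      φ (l * x + (1 - l) * y) = l * φ x + (1 - l) * φ y)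
    (hφab : φ a < φ b)
    (hgint : IntegrableOn g (Set.Icc a b))
    (hfint : IntegrableOn f (Set.Icc a b))
    (hfdom : GPhiHConvexDominated (Set.Icc a b) (fun _ => 1) φ g f) :
    |(1 / (φ b - φ a)) * ∫ x in φ a..φ b, f x - (1 / 2) * f ((φ a + φ b) / 2)| ≤
      (1 / (φ b - φ a)) * ∫ x in φ a..φ b, g x - (1 / 2) * g ((φ a + φ b) / 2) := by
  have hsub : Icc (φ a) (φ b) ⊆ Icc a b :=
    Icc_subset_Icc (hφmaps ⟨le_rfl, hab.le⟩).1 (hφmaps ⟨hab.le, le_rfl⟩).2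
  have hI {F : ℝ → ℝ} (hF : IntegrableOn F (Icc a b)) : IntervalIntegrable F volume (φ a) (φ b) :=
    (intervalIntegrable_iff_integrableOn_Icc_of_le hφab.le).2 (hF.mono_set hsub)
  refine abs_average_sub_half_le_of_reflect_dominated hφab (hI hfint) (hI hgint) ?_
  intro x hx
  obtain ⟨p, hp, q, hq, rfl, hqx⟩ := exists_mem_Icc_map_eq_and_map_eq_reflect hab.le hφaff hφab hx
  have hmid : (φ a + φ b) / 2 = (φ p + φ q) / 2 := by rw [hqx]; ring
  rw [hmid, ← hqx]
  exact hfdom.abs_add_sub_midpoint_le hp hq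

theorem stmt9 (a b : ℝ) (hab : a < b) (φ f g : ℝ → ℝ)
    (hφmaps : Set.MapsTo φ (Set.Icc a b) (Set.Icc a b))
    (hφaff : ∀ x ∈ Set.Icc a b, ∀ y ∈ Set.Icc a b, ∀ l ∈ Set.Icc (0:ℝ) 1,
      φ (l * x + (1 - l) * y) = l * φ x + (1 - l) * φ y)
    (hφcont : ContinuousOn φ (Set.Icc a b))
    (hφab : φ a < φ b)
    (hg0 : ∀ x ∈ Set.Icc a b, 0 ≤ g x)
    (hgconv : PhiHConvexOn (Set.Icc a b) (fun _ => 1) φ g)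
    (hgint : IntegrableOn g (Set.Icc a b))
    (hf0 : ∀ x ∈ Set.Icc a b, 0 ≤ f x)
    (hfint : IntegrableOn f (Set.Icc a b))
    (hfdom : GPhiHConvexDominated (Set.Icc a b) (fun _ => 1) φ g f) :
    |(1 / (φ b - φ a)) * ∫ x in φ a..φ b, f x - (1 / 2) * f ((φ a + φ b) / 2)| ≤
      (1 / (φ b - φ a)) * ∫ x in φ a..φ b, g x - (1 / 2) * g ((φ a + φ b) / 2) :=
  stmt9_general a b hab φ f g hφmaps hφaff hφab hgint hfint hfdom
end

section
/- Let a < b, let g : [a,b] → [0,∞) be a P-function that is Lebesgue integrable, and let f : [a,b] → [0,∞) be a Lebesgue integrable (g,P(I))-convex dominated function. Then |(1/(b−a)) ∫_a^b f(x) dx − (1/2) f((a+b)/2)| ≤ (1/(b−a)) ∫_a^b g(x) dx − (1/2) g((a+b)/2). -/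
/-! Taking `t = 1/2` and `y = a + b - x` in the domination inequality bounds the integrand
`f x + f (a + b - x) - f ((a + b) / 2)` pointwise by the corresponding expression in `g`.
Integrating over `[a, b]`, the reflection `x ↦ a + b - x` preserves the integral, so both sides
become twice the midpoint defects `∫ (f - f ((a + b) / 2) / 2)` and `∫ (g - g ((a + b) / 2) / 2)`. -/

open MeasureTheory Set

namespace intervalIntegral

theorem integral_comp_add_sub (f : ℝ → ℝ) (a b : ℝ) :
    ∫ x in a..b, f (a + b - x) = ∫ x in a..b, f x := by
  rw [integral_comp_sub_left f (a + b)]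
  simp

theorem _root_.IntervalIntegrable.comp_add_sub {f : ℝ → ℝ} {a b : ℝ}
    (hf : IntervalIntegrable f volume a b) :
    IntervalIntegrable (fun x => f (a + b - x)) volume a b := by
  simpa using (hf.comp_sub_left (a + b)).symm

theorem integral_sub_half_eq_half_integral_add_comp_add_sub {f : ℝ → ℝ} {a b : ℝ}
    (hf : IntervalIntegrable f volume a b) (c : ℝ) :
    ∫ x in a..b, (f x - 1 / 2 * c) = 1 / 2 * ∫ x in a..b, (f x + f (a + b - x) - c) := by
  have hf' := hf.comp_add_sub
  rw [integral_sub hf intervalIntegrable_const, integral_sub (hf.add hf') intervalIntegrable_const,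
    integral_add hf hf', integral_comp_add_sub, integral_const, integral_const, smul_eq_mul,
    smul_eq_mul]
  ring

end intervalIntegral

open intervalIntegral

theorem stmt16_general (a b : ℝ) (hab : a < b) (f g : ℝ → ℝ)
    (hgint : IntegrableOn g (Set.Icc a b))
    (hfint : IntegrableOn f (Set.Icc a b))
    (hfdom : ∀ x ∈ Set.Icc a b, ∀ y ∈ Set.Icc a b, ∀ t ∈ Set.Ioo (0:ℝ) 1,
      |f x + f y - f (t * x + (1 - t) * y)| ≤
        g x + g y - g (t * x + (1 - t) * y)) :
    |(1 / (b - a)) * ∫ x in a..b, f x - (1 / 2) * f ((a + b) / 2)| ≤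
      (1 / (b - a)) * ∫ x in a..b, g x - (1 / 2) * g ((a + b) / 2) := by
  have hfI : IntervalIntegrable f volume a b := (uIcc_of_le hab.le ▸ hfint).intervalIntegrable
  have hgI : IntervalIntegrable g volume a b := (uIcc_of_le hab.le ▸ hgint).intervalIntegrable
  have hmid : ∀ x ∈ Icc a b, |f x + f (a + b - x) - f ((a + b) / 2)| ≤
      g x + g (a + b - x) - g ((a + b) / 2) := by
    intro x hx
    have hx' : a + b - x ∈ Icc a b := ⟨by linarith [hx.2], by linarith [hx.1]⟩
    convert hfdom x hx _ hx' (1 / 2) ⟨by norm_num, by norm_num⟩ using 3 <;> ring_nf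
  have hbound : |∫ x in a..b, (f x + f (a + b - x) - f ((a + b) / 2))| ≤
      ∫ x in a..b, (g x + g (a + b - x) - g ((a + b) / 2)) := by
    rw [← Real.norm_eq_abs]
    refine norm_integral_le_of_norm_le hab.le (ae_of_all _ fun x hx => ?_)
      ((hgI.add hgI.comp_add_sub).sub intervalIntegrable_const)
    exact hmid x (Ioc_subset_Icc_self hx)
  -- In the statement the `∫` binder extends over `- 1 / 2 * f ((a + b) / 2)`.
  rw [integral_sub_half_eq_half_integral_add_comp_add_sub hfI,
    integral_sub_half_eq_half_integral_add_comp_add_sub hgI, ← mul_assoc, ← mul_assoc, abs_mul,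
    abs_of_pos (by have := sub_pos.2 hab; positivity)]
  gcongr

theorem stmt16 (a b : ℝ) (hab : a < b) (f g : ℝ → ℝ)
    (hg0 : ∀ x ∈ Set.Icc a b, 0 ≤ g x)
    (hgconv : ∀ x ∈ Set.Icc a b, ∀ y ∈ Set.Icc a b, ∀ t ∈ Set.Ioo (0:ℝ) 1,
      g (t * x + (1 - t) * y) ≤ g x + g y)
    (hgint : IntegrableOn g (Set.Icc a b))
    (hf0 : ∀ x ∈ Set.Icc a b, 0 ≤ f x)
    (hfint : IntegrableOn f (Set.Icc a b))
    (hfdom : ∀ x ∈ Set.Icc a b, ∀ y ∈ Set.Icc a b, ∀ t ∈ Set.Ioo (0:ℝ) 1,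
      |f x + f y - f (t * x + (1 - t) * y)| ≤
        g x + g y - g (t * x + (1 - t) * y)) :
    |(1 / (b - a)) * ∫ x in a..b, f x - (1 / 2) * f ((a + b) / 2)| ≤
      (1 / (b - a)) * ∫ x in a..b, g x - (1 / 2) * g ((a + b) / 2) :=
  stmt16_general a b hab f g hgint hfint hfdom
end
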